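/- Cantor normal forms do not have limits of all strictly increasing sequences: there is a strictly increasing sequence of CNFs (namely ω, ω^ω, ω^ω^ω, …) that has no least upper bound in Cnf. -/

import Mathlib

/-! Every tree, CNF or not, lies strictly below some term of the tower, since `⟨s, t⟩ < ω^a`
as soon as `s < a`. An upper bound `x` of the tower would thus satisfy `x < ω^…^ω ≤ x`. -/

/-- Unlabelled binary trees. -/
inductive T : Type
  | zero : T
  | node : T → T → T

/-- The hereditary lexicographical order on binary trees. -/
inductive tlt : T → T → Prop
  | z {a b : T} : tlt T.zero (T.node a b)
  | l {a b c d : T} : tlt a c → tlt (T.node a b) (T.node c d)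
  | r {a b d : T} : tlt b d → tlt (T.node a b) (T.node a d)

/-- The reflexive closure of `tlt`. -/
def tle (s t : T) : Prop := tlt s t ∨ s = t

/-- The left subtree, if it exists. -/
def left : T → T
  | T.zero => T.zero
  | T.node a _ => a

/-- The Cantor normal form predicate. -/
inductive isCNF : T → Prop
  | z : isCNF T.zero
  | n {s t : T} : isCNF s → isCNF t → tle (left t) s → isCNF (T.node s t)

/-- The sequence ω, ω^ω, ω^ω^ω, … of CNFs, where ω = ⟨⟨0,0⟩,0⟩ and ω^a = ⟨a,0⟩. -/
def wtower : ℕ → T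
  | 0 => T.node (T.node T.zero T.zero) T.zero
  | k + 1 => T.node (wtower k) T.zero

theorem tlt_irrefl (t : T) : ¬ tlt t t := by
  induction t with
  | zero => intro h; cases h
  | node a b iha ihb =>
    intro h
    cases h with
    | l h => exact iha h
    | r h => exact ihb h

theorem tlt_trans {a b c : T} (hab : tlt a b) (hbc : tlt b c) : tlt a c := by
  induction hab generalizing c with
  | z => cases hbc <;> exact tlt.z
  | l h ih =>
    cases hbc with
    | l h' => exact tlt.l (ih h')
    | r _ => exact tlt.l h
  | r h ih =>
    cases hbc with
    | l h' => exact tlt.l h'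
    | r h' => exact tlt.r (ih h')

theorem not_tle_of_tlt {s t : T} (h : tlt s t) : ¬ tle t s
  | .inl h' => tlt_irrefl s (tlt_trans h h')
  | .inr h' => tlt_irrefl s (h' ▸ h)

theorem tlt_node_left (a b : T) : tlt a (T.node a b) := by
  induction a generalizing b with
  | zero => exact tlt.z
  | node a _ iha _ => exact tlt.l (iha _)

theorem zero_tlt_wtower (k : ℕ) : tlt T.zero (wtower k) := by
  cases k <;> exact tlt.z

theorem isCNF_wtower (k : ℕ) : isCNF (wtower k) := by
  induction k with
  | zero => exact .n (.n .z .z (.inr rfl)) .z (.inl tlt.z)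
  | succ k ih => exact .n ih .z (.inl (zero_tlt_wtower k))

theorem wtower_tlt_wtower_succ (k : ℕ) : tlt (wtower k) (wtower (k + 1)) :=
  tlt_node_left _ _

theorem exists_tlt_wtower (t : T) : ∃ k, tlt t (wtower k) := by
  induction t with
  | zero => exact ⟨0, tlt.z⟩
  | node s _ ihs _ =>
    obtain ⟨k, hk⟩ := ihs
    exact ⟨k + 1, tlt.l hk⟩

theorem not_exists_upper_bound_wtower : ¬ ∃ x : T, ∀ i, tle (wtower i) x := by
  rintro ⟨x, hx⟩
  obtain ⟨k, hk⟩ := exists_tlt_wtower x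
  exact not_tle_of_tlt hk (hx k)

/-- The sequence ω, ω^ω, … is a strictly increasing sequence of CNFs with no
least upper bound among CNFs: Cnf does not have limits. -/
theorem cnf_no_limits :
    (∀ i, isCNF (wtower i)) ∧
    (∀ i, tlt (wtower i) (wtower (i + 1))) ∧
    ¬ ∃ x : T, isCNF x ∧
        (∀ i, tle (wtower i) x) ∧
        (∀ b : T, isCNF b → (∀ i, tle (wtower i) b) → tle x b) :=
  ⟨isCNF_wtower, wtower_tlt_wtower_succ,
    fun ⟨x, _, hx, _⟩ => not_exists_upper_bound_wtower ⟨x, hx⟩⟩
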